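/- arXiv:2512.02286 — 3 statements merged into one kernel-verified Lean document; each statement's English description precedes it below -/
import Mathlib

section
/- Determinantal sign-decomposition of a product of two antisymmetrizations: for arbitrary functions f_1 of M variables and f_2 of N-M variables, and any variables w_1,...,w_N, ∑_{σ ∈ S_N} sgn(σ) f_1(w_{σ(1)},...,w_{σ(M)}) f_2(w_{σ(M+1)},...,w_{σ(N)}) = (-1)^{binom(N+1,2)+binom(M+1,2)} ∑_{T ⊆ {1,...,N}, |T| = N-M} (-1)^{∑_{i} T_i} [∑_{ρ ∈ S_M} sgn(ρ) f_1(w_{T^c_{ρ(1)}},...,w_{T^c_{ρ(M)}})]·[∑_{τ ∈ S_{N-M}} sgn(τ) f_2(w_{T_{τ(1)}},...,w_{T_{τ(N-M)}})], where T^c is the complement of T and T_i denotes the i-th smallest element of T. -/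
/-!
Every `σ ∈ S_N` factors uniquely as `σ = π_T ∘ (ρ ⊕ τ)` with `ρ ∈ S_M`, `τ ∈ S_{N-M}`
and `T = σ {M+1, …, N}`, where the shuffle `π_T` maps the first `M` positions increasingly
onto `Tᶜ` and the last `N - M` increasingly onto `T`; this splits the left-hand side into the
sum over `T`.
The inversions of `π_T` are the pairs `t < c` with `t ∈ T`, `c ∉ T`. Since each `t` has
`N - 1 - t` elements above it, `#inv + C(N-M, 2) + ∑_{t ∈ T} (t + 1) = (N - M) N`, which gives
`sgn π_T = (-1)^(C(N+1,2) + C(M+1,2) + ∑_{t ∈ T} (t + 1))`.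
-/

open Equiv Finset

theorem Fintype.sum_dite_zero {ι M : Type*} [Fintype ι] [AddCommMonoid M] (p : ι → Prop)
    [DecidablePred p] (G : ∀ i, p i → M) :
    ∑ i, (if h : p i then G i h else 0) = ∑ i : {i // p i}, G i i.2 := by
  rw [← Fintype.sum_subtype_add_sum_subtype p, Finset.sum_congr rfl fun i _ => dif_pos i.2,
    Finset.sum_congr rfl fun (i : {i // ¬ p i}) _ => dif_neg i.2, Finset.sum_const_zero, add_zero]

theorem Nat.add_choose_two (m n : ℕ) : (m + n).choose 2 = m.choose 2 + m * n + n.choose 2 := by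
  induction n with
  | zero => simp
  | succ n ih =>
    rw [← add_assoc, Nat.choose_succ_succ', Nat.choose_one_right, ih, Nat.choose_succ_succ' n,
      Nat.choose_one_right]
    ring

theorem even_add_choose_two_add_choose_two {N M X S : ℕ} (hM : M ≤ N)
    (h : X + (N - M).choose 2 + S = (N - M) * N) :
    Even (X + ((N + 1).choose 2 + (M + 1).choose 2 + S)) := by
  obtain ⟨K, rfl⟩ := Nat.exists_eq_add_of_le hM
  rw [Nat.add_sub_cancel_left] at h
  have : X + ((M + K + 1).choose 2 + (M + 1).choose 2 + S)
      = 2 * ((M + 1).choose 2 + M * K) + K * (K + 1) := by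
    rw [add_right_comm M K 1, Nat.add_choose_two]
    linarith
  rw [this]
  exact (even_two_mul _).add (Nat.even_mul_succ_self K)

namespace Fin

def sumSubEquiv {N M : ℕ} (hM : M ≤ N) : Fin M ⊕ Fin (N - M) ≃ Fin N :=
  finSumFinEquiv.trans (finCongr (Nat.add_sub_cancel' hM))

variable {N M : ℕ} (hM : M ≤ N)

@[simp] theorem sumSubEquiv_inl (i : Fin M) : sumSubEquiv hM (.inl i) = castLE hM i := rfl

theorem sumSubEquiv_inr (j : Fin (N - M)) (hj : M + j < N) :
    sumSubEquiv hM (.inr j) = ⟨M + j, hj⟩ := rfl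

@[simp] theorem val_sumSubEquiv_inr (j : Fin (N - M)) :
    (sumSubEquiv hM (.inr j) : ℕ) = M + j := rfl

@[simp] theorem sumSubEquiv_inr_lt_inr {j j' : Fin (N - M)} :
    sumSubEquiv hM (.inr j) < sumSubEquiv hM (.inr j') ↔ j < j' := by
  rw [lt_def, lt_def, val_sumSubEquiv_inr, val_sumSubEquiv_inr, Nat.add_lt_add_iff_left]

@[simp] theorem castLE_lt_sumSubEquiv_inr (i : Fin M) (j : Fin (N - M)) :
    castLE hM i < sumSubEquiv hM (.inr j) := by
  rw [lt_def, val_castLE, val_sumSubEquiv_inr]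
  omega

@[simp] theorem not_sumSubEquiv_inr_lt_castLE (i : Fin M) (j : Fin (N - M)) :
    ¬ sumSubEquiv hM (.inr j) < castLE hM i := by
  rw [lt_def, val_castLE, val_sumSubEquiv_inr]
  omega

variable (ρ : Perm (Fin M)) (τ : Perm (Fin (N - M)))

def blockPerm : Perm (Fin N) :=
  (sumSubEquiv hM).permCongr (ρ.sumCongr τ)

@[simp] theorem blockPerm_castLE (i : Fin M) :
    blockPerm hM ρ τ (castLE hM i) = castLE hM (ρ i) := by
  simp [blockPerm, ← sumSubEquiv_inl]

theorem blockPerm_mk_add (j : Fin (N - M)) (hj : M + j < N) :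
    blockPerm hM ρ τ ⟨M + j, hj⟩ = ⟨M + τ j, by omega⟩ := by
  rw [← sumSubEquiv_inr hM j hj, ← sumSubEquiv_inr hM (τ j)]
  simp [blockPerm]

theorem sign_blockPerm :
    Perm.sign (blockPerm hM ρ τ) = Perm.sign ρ * Perm.sign τ := by
  rw [blockPerm, Perm.sign_permCongr, Perm.sign_sumCongr]

theorem blockPerm_injective : Function.Injective fun x : Perm (Fin M) × Perm (Fin (N - M)) =>
    blockPerm hM x.1 x.2 :=
  (sumSubEquiv hM).permCongr.injective.comp Perm.sumCongrHom_injective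

end Fin

namespace Finset

theorem prod_orderEmbOfFin {α β : Type*} [LinearOrder α] [CommMonoid β] (s : Finset α)
    {k : ℕ} (h : #s = k) (f : α → β) : ∏ i, f (s.orderEmbOfFin h i) = ∏ x ∈ s, f x := by
  conv_rhs => rw [← map_orderEmbOfFin_univ s h]
  rw [prod_map]
  rfl

theorem card_filter_lt_product_compl_add {n : ℕ} (T : Finset (Fin n)) :
    #{p ∈ T ×ˢ Tᶜ | p.1 < p.2} + (#T).choose 2 + ∑ t ∈ T, ((t : ℕ) + 1) = #T * n := by
  have hsplit : #{p ∈ T ×ˢ univ | p.1 < p.2}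
      = #{p ∈ T ×ˢ Tᶜ | p.1 < p.2} + #{p ∈ T ×ˢ T | p.1 < p.2} := by
    rw [← union_compl T, product_union, filter_union, card_union_of_disjoint
      (disjoint_filter_filter (disjoint_product.2 (Or.inr disjoint_compl_right))), add_comm]
  have hIoi : #{p ∈ T ×ˢ univ | p.1 < p.2} = ∑ t ∈ T, (n - 1 - t) := by
    rw [card_filter, sum_product]
    refine sum_congr rfl fun t _ => ?_
    rw [← card_filter, filter_lt_eq_Ioi, Fin.card_Ioi]
  rw [← card_product_filter_lt, ← hsplit, hIoi, ← sum_add_distrib, ← smul_eq_mul,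
    ← sum_const]
  exact sum_congr rfl fun t _ => by omega

variable {N M : ℕ}

theorem card_subtype_card_eq_and_card_compl_eq (hM : M ≤ N) :
    Fintype.card {T : Finset (Fin N) // #T = N - M ∧ #Tᶜ = M} = N.choose (N - M) := by
  have hcompl (T : Finset (Fin N)) : #T = N - M ∧ #Tᶜ = M ↔ #T = N - M := by
    have := card_le_univ T
    rw [card_compl, Fintype.card_fin] at *
    omega
  rw [Fintype.card_congr (Equiv.subtypeEquivRight hcompl), Fintype.card_finset_len,
    Fintype.card_fin]

variable (T : Finset (Fin N)) (h : #T = N - M ∧ #Tᶜ = M)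

theorem orderEmbOfFin_compl_ne (i : Fin M) (j : Fin (N - M)) :
    Tᶜ.orderEmbOfFin h.2 i ≠ T.orderEmbOfFin h.1 j := fun hij =>
  mem_compl.1 (hij ▸ orderEmbOfFin_mem Tᶜ h.2 i) (orderEmbOfFin_mem T h.1 j)

variable (hM : M ≤ N)

noncomputable def shufflePerm : Perm (Fin N) :=
  (Fin.sumSubEquiv hM).symm.trans ((Equiv.sumComm _ _).trans (finSumEquivOfFinset h.1 h.2))

@[simp] theorem shufflePerm_castLE (i : Fin M) :
    shufflePerm T h hM (Fin.castLE hM i) = Tᶜ.orderEmbOfFin h.2 i := by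
  simp [shufflePerm, ← Fin.sumSubEquiv_inl]

@[simp] theorem shufflePerm_sumSubEquiv_inr (j : Fin (N - M)) :
    shufflePerm T h hM (Fin.sumSubEquiv hM (.inr j)) = T.orderEmbOfFin h.1 j := by
  simp [shufflePerm]

theorem shufflePerm_mk_add (j : Fin (N - M)) (hj : M + j < N) :
    shufflePerm T h hM ⟨M + j, hj⟩ = T.orderEmbOfFin h.1 j := by
  rw [← Fin.sumSubEquiv_inr hM j hj, shufflePerm_sumSubEquiv_inr]

theorem sign_shufflePerm :
    Perm.sign (shufflePerm T h hM) = (-1) ^ #{p ∈ T ×ˢ Tᶜ | p.1 < p.2} := by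
  set e := Fin.sumSubEquiv hM
  rw [Perm.sign_eq_prod_prod_Ioi]
  calc ∏ i, ∏ j ∈ Ioi i,
        (if shufflePerm T h hM i < shufflePerm T h hM j then (1 : ℤˣ) else -1)
    _ = ∏ x, ∏ y, if e x < e y then
          (if shufflePerm T h hM (e x) < shufflePerm T h hM (e y) then 1 else -1) else 1 := by
        rw [← e.prod_comp]
        refine prod_congr rfl fun x _ => ?_
        rw [← filter_lt_eq_Ioi, prod_filter, ← e.prod_comp]
    _ = ∏ i : Fin M, ∏ j : Fin (N - M),
          if Tᶜ.orderEmbOfFin h.2 i < T.orderEmbOfFin h.1 j then 1 else -1 := by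
        simp +contextual [Fintype.prod_sum_type, e]
    _ = ∏ t ∈ T, ∏ c ∈ Tᶜ, if t < c then -1 else 1 := by
        rw [← prod_orderEmbOfFin T h.1, prod_comm]
        refine prod_congr rfl fun j _ => ?_
        rw [← prod_orderEmbOfFin Tᶜ h.2]
        refine prod_congr rfl fun i _ => ?_
        rcases (orderEmbOfFin_compl_ne T h i j).lt_or_gt with hlt | hlt <;>
          simp [hlt, hlt.not_gt]
    _ = _ := by
        rw [← prod_product', prod_ite, prod_const, prod_const_one, mul_one]

theorem image_shufflePerm_mul_blockPerm (ρ : Perm (Fin M)) (τ : Perm (Fin (N - M))) :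
    univ.image (fun j : Fin (N - M) =>
      (shufflePerm T h hM * Fin.blockPerm hM ρ τ) ⟨M + j, by omega⟩) = T := by
  ext t
  simp only [mem_image, mem_univ, true_and, Perm.mul_apply, Fin.blockPerm_mk_add,
    shufflePerm_mk_add]
  refine ⟨fun ⟨j, hj⟩ => hj ▸ orderEmbOfFin_mem T h.1 (τ j), fun ht => ?_⟩
  obtain ⟨j, rfl⟩ : t ∈ Set.range (T.orderEmbOfFin h.1) := by rwa [range_orderEmbOfFin]
  exact ⟨τ.symm j, by rw [τ.apply_symm_apply]⟩

theorem bijective_shufflePerm_mul_blockPerm :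
    Function.Bijective fun x : {T : Finset (Fin N) // #T = N - M ∧ #Tᶜ = M} ×
        Perm (Fin M) × Perm (Fin (N - M)) =>
      shufflePerm x.1.1 x.1.2 hM * Fin.blockPerm hM x.2.1 x.2.2 := by
  refine (Fintype.bijective_iff_injective_and_card _).2 ⟨?_, ?_⟩
  · rintro ⟨⟨T, hT⟩, ρ, τ⟩ ⟨⟨T', hT'⟩, ρ', τ'⟩ heq
    dsimp only at heq
    obtain rfl : T = T' := by
      have := congrArg (fun σ : Perm (Fin N) =>
        univ.image fun j : Fin (N - M) => σ ⟨M + j, by omega⟩) heq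
      simpa only [image_shufflePerm_mul_blockPerm] using this
    have hblock : Fin.blockPerm hM ρ τ = Fin.blockPerm hM ρ' τ' := mul_left_cancel heq
    obtain ⟨rfl, rfl⟩ :=
      Prod.ext_iff.1 (Fin.blockPerm_injective hM (a₁ := (ρ, τ)) (a₂ := (ρ', τ')) hblock)
    rfl
  · rw [Fintype.card_prod, Fintype.card_prod, card_subtype_card_eq_and_card_compl_eq hM,
      Fintype.card_perm, Fintype.card_perm, Fintype.card_perm, Fintype.card_fin,
      Fintype.card_fin, Fintype.card_fin, ← mul_assoc]
    have := Nat.choose_mul_factorial_mul_factorial (Nat.sub_le N M)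
    rwa [Nat.sub_sub_self hM, mul_right_comm] at this

theorem sum_sign_mul_shufflePerm_mul_blockPerm {R : Type*} [CommRing R] (f₁ : (Fin M → R) → R)
    (f₂ : (Fin (N - M) → R) → R) (w : Fin N → R) :
    ∑ ρ : Perm (Fin M), ∑ τ : Perm (Fin (N - M)),
      ((Perm.sign (shufflePerm T h hM * Fin.blockPerm hM ρ τ) : ℤ) : R) *
        (f₁ (fun i => w ((shufflePerm T h hM * Fin.blockPerm hM ρ τ) (Fin.castLE hM i))) *
          f₂ (fun j => w ((shufflePerm T h hM * Fin.blockPerm hM ρ τ) ⟨M + j, by omega⟩)))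
      = ((Perm.sign (shufflePerm T h hM) : ℤ) : R) *
        ((∑ ρ : Perm (Fin M), ((Perm.sign ρ : ℤ) : R) *
            f₁ (fun i => w (Tᶜ.orderEmbOfFin h.2 (ρ i)))) *
          ∑ τ : Perm (Fin (N - M)), ((Perm.sign τ : ℤ) : R) *
            f₂ (fun j => w (T.orderEmbOfFin h.1 (τ j)))) := by
  simp only [Perm.mul_apply, Fin.blockPerm_castLE, shufflePerm_castLE, Fin.blockPerm_mk_add,
    shufflePerm_mk_add, map_mul, Fin.sign_blockPerm, Units.val_mul, Int.cast_mul]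
  rw [sum_mul_sum, mul_sum]
  refine sum_congr rfl fun ρ _ => ?_
  rw [mul_sum]
  exact sum_congr rfl fun τ _ => by ring

theorem cast_sign_shufflePerm {R : Type*} [CommRing R] :
    ((Perm.sign (shufflePerm T h hM) : ℤ) : R)
      = (-1) ^ ((N + 1).choose 2 + (M + 1).choose 2) * (-1) ^ ∑ t ∈ T, ((t : ℕ) + 1) := by
  have hcount := card_filter_lt_product_compl_add T
  rw [h.1] at hcount
  rw [sign_shufflePerm, ← pow_add]
  push_cast
  exact neg_one_pow_congr (Nat.even_add.1 (even_add_choose_two_add_choose_two hM hcount))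

end Finset

/-- determinantal sign-decomposition of a product of two antisymmetrizations:
`∑_{σ ∈ S_N} sgn(σ) f₁(w_{σ(1)},…,w_{σ(M)}) f₂(w_{σ(M+1)},…,w_{σ(N)})` equals
`(-1)^{C(N+1,2)+C(M+1,2)}` times the sum over subsets `T ⊆ {1,…,N}` of size `N-M`
of `(-1)^{∑ T_i}` times the antisymmetrization of `f₁` over the complement of `T`
(enumerated increasingly) times the antisymmetrization of `f₂` over `T`. -/
theorem antisymmetrization_decomposition {R : Type*} [CommRing R] (N M : ℕ) (hM : M ≤ N)
    (f₁ : (Fin M → R) → R) (f₂ : (Fin (N - M) → R) → R) (w : Fin N → R) :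
    ∑ σ : Equiv.Perm (Fin N), ((Equiv.Perm.sign σ : ℤ) : R) *
        (f₁ (fun i => w (σ (Fin.castLE hM i))) *
          f₂ (fun i => w (σ ⟨M + i.1, by have := i.2; omega⟩)))
      = (-1 : R) ^ ((N + 1).choose 2 + (M + 1).choose 2) *
          ∑ T : Finset (Fin N),
            (if h : T.card = N - M ∧ Tᶜ.card = M then
              ((-1 : R) ^ (∑ t ∈ T, (t.1 + 1))) *
                (∑ ρ : Equiv.Perm (Fin M), ((Equiv.Perm.sign ρ : ℤ) : R) *
                  f₁ (fun i => w ((Tᶜ.orderIsoOfFin h.2 (ρ i)).1))) *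
                (∑ τ : Equiv.Perm (Fin (N - M)), ((Equiv.Perm.sign τ : ℤ) : R) *
                  f₂ (fun i => w ((T.orderIsoOfFin h.1 (τ i)).1)))
            else 0) := by
  rw [← (bijective_shufflePerm_mul_blockPerm hM).sum_comp, Fintype.sum_dite_zero, mul_sum]
  simp only [Fintype.sum_prod_type]
  refine sum_congr rfl fun T _ => ?_
  rw [sum_sign_mul_shufflePerm_mul_blockPerm T.1 T.2, cast_sign_shufflePerm]
  simp only [coe_orderIsoOfFin_apply]
  ring
end

section
/- Geometric-series recurrence for the contour kernel p: for the function p_k(x) = (1/2πi)∮_β w^{k-x} e^{t(w-1)} / ((w-α)(w-1)^k) dw, where β is a circle of radius R > 1 around the origin enclosing 1, α, the identity p_{k+1}(z) = ∑_{y ≥ z} p_k(y) holds for all integers z and k ≥ 1, the series converging absolutely. -/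
/-!
For `‖w‖ = R > 1` the geometric series `∑_{n ≥ 0} w ^ (m - n) = w ^ (m + 1) / (w - 1)` converges
uniformly on the circle, so it can be integrated termwise against any continuous `g`. Termwise,
`(2πi)⁻¹ ∮ w ^ (m - n) g(w) dw` is the `n`-th term of the Cauchy power series of
`w ^ (m + 1) g(w)` evaluated at the point `1` of the disc of radius `R`; that series has radius
at least `R`, which gives absolute convergence. With `m = k - z` and
`g(w) = e^{t(w-1)} / ((w - α)(w - 1)^k)` the summed integrand is that of `p_{k+1}(z)`.
-/

open Complex

/-- The contour kernel `p_k(x) = (1/2πi) ∮_{|w|=R} w^{k-x} e^{t(w-1)}/((w-α)(w-1)^k) dw`. -/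
noncomputable def pker (α t R : ℝ) (k : ℕ) (x : ℤ) : ℂ :=
  (2 * Real.pi * Complex.I)⁻¹ *
    ∮ w in C(0, R), w ^ ((k : ℤ) - x) * Complex.exp ((t : ℂ) * (w - 1)) /
      ((w - (α : ℂ)) * (w - 1) ^ k)

open Metric
open scoped NNReal

section GeometricSeriesUnderCircleIntegral

variable {R : ℝ} {g : ℂ → ℂ}

lemma circleIntegral_zpow_sub_mul_eq (hR : 0 < R) (g : ℂ → ℂ) (m : ℤ) (n : ℕ) :
    ∮ w in C(0, R), w ^ (m - n) * g w =
      2 * Real.pi * I * cauchyPowerSeries (fun w => w ^ (m + 1) * g w) 0 R n fun _ => 1 := by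
  rw [cauchyPowerSeries_apply, smul_eq_mul, mul_inv_cancel_left₀ two_pi_I_ne_zero]
  refine circleIntegral.integral_congr hR.le fun w hw => ?_
  have hw0 : w ≠ 0 := ne_of_mem_sphere hw hR.ne'
  simp only [sub_zero, smul_eq_mul, one_div, inv_pow, zpow_sub₀ hw0, zpow_add_one₀ hw0,
    zpow_natCast]
  field_simp

variable (hR : 1 < R) (hg : ContinuousOn g (sphere 0 R)) (m : ℤ)
include hR hg

lemma circleIntegrable_zpow_mul : CircleIntegrable (fun w => w ^ m * g w) 0 R := by
  refine ContinuousOn.circleIntegrable (by linarith) (ContinuousOn.mul ?_ hg)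
  exact continuousOn_id.zpow₀ m fun w hw => Or.inl (ne_of_mem_sphere hw (by linarith))

lemma summable_norm_circleIntegral_zpow_sub_mul :
    Summable fun n : ℕ => ‖∮ w in C(0, R), w ^ (m - n) * g w‖ := by
  lift R to ℝ≥0 using (zero_lt_one.trans hR).le
  simp_rw [circleIntegral_zpow_sub_mul_eq (zero_lt_one.trans hR) g m, norm_mul]
  refine .mul_left _ ((cauchyPowerSeries _ 0 R).summable_norm_apply ?_)
  refine mem_eball_zero_iff.2 (lt_of_lt_of_le ?_ (le_radius_cauchyPowerSeries _ 0 R))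
  simpa using hR

lemma hasSum_circleIntegral_zpow_sub_mul :
    HasSum (fun n : ℕ => ∮ w in C(0, R), w ^ (m - n) * g w)
      (∮ w in C(0, R), w ^ (m + 1) / (w - 1) * g w) := by
  have h := (hasSum_cauchyPowerSeries_integral (circleIntegrable_zpow_mul hR hg (m + 1))
    (w := 1) (by simpa using hR)).mul_left (2 * Real.pi * I)
  rw [smul_eq_mul, mul_inv_cancel_left₀ two_pi_I_ne_zero] at h
  have hsum : ∮ z in C(0, R), (z - (0 + 1))⁻¹ • (z ^ (m + 1) * g z) =
      ∮ w in C(0, R), w ^ (m + 1) / (w - 1) * g w := by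
    simp only [zero_add, smul_eq_mul, div_eq_inv_mul, mul_assoc]
  simp_rw [circleIntegral_zpow_sub_mul_eq (zero_lt_one.trans hR) g m]
  rwa [hsum] at h

end GeometricSeriesUnderCircleIntegral

lemma continuousOn_exp_div_sphere {α R : ℝ} (t : ℝ) (k : ℕ) (hα : |α| ≠ R) (hR : R ≠ 1) :
    ContinuousOn (fun w : ℂ => exp (t * (w - 1)) / ((w - α) * (w - 1) ^ k)) (sphere 0 R) := by
  refine ContinuousOn.div (by fun_prop) (by fun_prop) fun w hw => ?_
  have hwR : ‖w‖ = R := by simpa using hw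
  refine mul_ne_zero (sub_ne_zero.2 ?_) (pow_ne_zero _ (sub_ne_zero.2 ?_)) <;> rintro rfl
  · exact hα (by simpa using hwR)
  · exact hR (by simpa using hwR.symm)

theorem pker_recurrence_general (α t R : ℝ) (hα0 : 0 < α) (hα1 : α < 1) (hR : 1 < R)
    (k : ℕ) (z : ℤ) :
    Summable (fun n : ℕ => ‖pker α t R k (z + n)‖) ∧
      ∑' n : ℕ, pker α t R k (z + n) = pker α t R (k + 1) z := by
  have hα : |α| ≠ R := by rw [abs_of_pos hα0]; exact (hα1.trans hR).ne
  have hg := continuousOn_exp_div_sphere t k hα hR.ne'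
  have hterm : ∀ n : ℕ, pker α t R k (z + n) = (2 * Real.pi * I)⁻¹ * ∮ w in C(0, R),
      w ^ ((k - z : ℤ) - n) * (exp (t * (w - 1)) / ((w - α) * (w - 1) ^ k)) := by
    intro n
    simp only [pker, mul_div_assoc, sub_sub]
  have hsucc : pker α t R (k + 1) z = (2 * Real.pi * I)⁻¹ * ∮ w in C(0, R),
      w ^ ((k - z : ℤ) + 1) / (w - 1) * (exp (t * (w - 1)) / ((w - α) * (w - 1) ^ k)) := by
    simp only [pker]
    congr 2 with w
    rw [Nat.cast_succ, add_sub_right_comm, pow_succ]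
    simp only [div_eq_mul_inv, mul_inv]
    ring
  simp_rw [hterm, norm_mul, hsucc]
  exact ⟨(summable_norm_circleIntegral_zpow_sub_mul hR hg _).mul_left _,
    ((hasSum_circleIntegral_zpow_sub_mul hR hg _).mul_left _).tsum_eq⟩

/-- geometric-series recurrence `p_{k+1}(z) = ∑_{y ≥ z} p_k(y)`, the series
converging absolutely; here the circle has radius `R > 1` and encloses `1` and `α`. -/
theorem pker_recurrence (α t R : ℝ) (hα0 : 0 < α) (hα1 : α < 1) (hR : 1 < R)
    (k : ℕ) (hk : 1 ≤ k) (z : ℤ) :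
    Summable (fun n : ℕ => ‖pker α t R k (z + n)‖) ∧
      ∑' n : ℕ, pker α t R k (z + n) = pker α t R (k + 1) z :=
  pker_recurrence_general α t R hα0 hα1 hR k z
end

section
/- Finite-sum recurrence for the contour kernel p: with p_k as above, for all integers s ≤ z and k ≥ 1, p_{k+1}(s) - p_{k+1}(z) = ∑_{y=s}^{z-1} p_k(y). -/
open Complex

/-!
The integrands of `p_{k+1}(y)` and `p_{k+1}(y+1)` differ by a factor `w`, so their difference
carries a factor `w - 1` which cancels one power of `w - 1` in the denominator and leaves the
integrand of `p_k(y)`. Hence `p_{k+1}(y) - p_{k+1}(y+1) = p_k(y)`, and the sum over `y ∈ [s, z)`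
telescopes.
-/

theorem Finset.sum_Ico_sub_add_one_int {M : Type*} [AddCommGroup M] (g : ℤ → M) {s z : ℤ}
    (hsz : s ≤ z) : ∑ y ∈ Finset.Ico s z, (g y - g (y + 1)) = g s - g z := by
  induction z, hsz using Int.leInduction with
  | base => simp
  | succ z hsz ih =>
    rw [← Finset.insert_Ico_right_eq_Ico_add_one hsz, Finset.sum_insert (by simp), ih]
    abel

theorem ne_of_mem_sphere_of_norm_lt {E : Type*} [SeminormedAddCommGroup E] {w c : E} {R : ℝ}
    (hw : w ∈ Metric.sphere (0 : E) R) (hc : ‖c‖ < R) : w ≠ c := by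
  rintro rfl
  rw [mem_sphere_zero_iff_norm] at hw
  exact hc.ne hw

noncomputable def pkerIntegrand (α t : ℝ) (k : ℕ) (x : ℤ) (w : ℂ) : ℂ :=
  w ^ ((k : ℤ) - x) * Complex.exp ((t : ℂ) * (w - 1)) / ((w - (α : ℂ)) * (w - 1) ^ k)

theorem pker_eq_circleIntegral (α t R : ℝ) (k : ℕ) (x : ℤ) :
    pker α t R k x = (2 * Real.pi * Complex.I)⁻¹ * ∮ w in C(0, R), pkerIntegrand α t k x w :=
  rfl

theorem circleIntegrable_pkerIntegrand {α R : ℝ} (hα : |α| < R) (hR : 1 < R) (t : ℝ) (k : ℕ)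
    (x : ℤ) : CircleIntegrable (pkerIntegrand α t k x) 0 R := by
  refine ContinuousOn.circleIntegrable (by linarith) fun w hw ↦ ContinuousAt.continuousWithinAt ?_
  have hw0 : w ≠ 0 := ne_of_mem_sphere_of_norm_lt hw (by rw [norm_zero]; linarith)
  have hw1 : w - 1 ≠ 0 := sub_ne_zero.2 (ne_of_mem_sphere_of_norm_lt hw (by simpa using hR))
  have hwα : w - α ≠ 0 := sub_ne_zero.2 (ne_of_mem_sphere_of_norm_lt hw (by simpa using hα))
  unfold pkerIntegrand
  exact ((continuousAt_zpow₀ _ _ (Or.inl hw0)).mul (by fun_prop)).div (by fun_prop)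
    (mul_ne_zero hwα (pow_ne_zero _ hw1))

theorem pkerIntegrand_succ_sub_pkerIntegrand_succ_add_one (α t : ℝ) (k : ℕ) (y : ℤ) {w : ℂ}
    (hw0 : w ≠ 0) (hw1 : w - 1 ≠ 0) :
    pkerIntegrand α t (k + 1) y w - pkerIntegrand α t (k + 1) (y + 1) w =
      pkerIntegrand α t k y w := by
  have hexp : ((k + 1 : ℕ) : ℤ) - y = ((k : ℤ) - y) + 1 := by push_cast; ring
  have hexp' : ((k + 1 : ℕ) : ℤ) - (y + 1) = (k : ℤ) - y := by push_cast; ring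
  unfold pkerIntegrand
  rw [hexp, hexp', zpow_add₀ hw0, zpow_one, pow_succ]
  field_simp

theorem pker_succ_sub_pker_succ_add_one {α R : ℝ} (hα : |α| < R) (hR : 1 < R) (t : ℝ) (k : ℕ)
    (y : ℤ) : pker α t R (k + 1) y - pker α t R (k + 1) (y + 1) = pker α t R k y := by
  simp only [pker_eq_circleIntegral, ← mul_sub]
  rw [← circleIntegral.integral_sub (circleIntegrable_pkerIntegrand hα hR ..)
    (circleIntegrable_pkerIntegrand hα hR ..)]
  congr 1
  refine circleIntegral.integral_congr (by linarith) fun w hw ↦ ?_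
  exact pkerIntegrand_succ_sub_pkerIntegrand_succ_add_one α t k y
    (ne_of_mem_sphere_of_norm_lt hw (by rw [norm_zero]; linarith))
    (sub_ne_zero.2 (ne_of_mem_sphere_of_norm_lt hw (by simpa using hR)))

theorem pker_finite_recurrence_general (α t R : ℝ) (hα0 : 0 < α) (hα1 : α < 1) (hR : 1 < R)
    (k : ℕ) (s z : ℤ) (hsz : s ≤ z) :
    pker α t R (k + 1) s - pker α t R (k + 1) z = ∑ y ∈ Finset.Ico s z, pker α t R k y := by
  have hα : |α| < R := by rw [abs_of_pos hα0]; linarith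
  simp only [← pker_succ_sub_pker_succ_add_one hα hR t k]
  exact (Finset.sum_Ico_sub_add_one_int _ hsz).symm

/-- finite-sum recurrence
`p_{k+1}(s) - p_{k+1}(z) = ∑_{y=s}^{z-1} p_k(y)` for all integers `s ≤ z`. -/
theorem pker_finite_recurrence (α t R : ℝ) (hα0 : 0 < α) (hα1 : α < 1) (hR : 1 < R)
    (k : ℕ) (hk : 1 ≤ k) (s z : ℤ) (hsz : s ≤ z) :
    pker α t R (k + 1) s - pker α t R (k + 1) z = ∑ y ∈ Finset.Ico s z, pker α t R k y :=
  pker_finite_recurrence_general α t R hα0 hα1 hR k s z hsz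
end
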